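/- Let n ≥ 1, let π ∈ ℝ^K and π' ∈ ℝ^{K'} be positive probability vectors, let C ∈ C_{π,π'}, and let θ^{(1)} ∈ [0,1]^{K×K} and θ^{(2)} ∈ [0,1]^{K'×K'} be symmetric matrices with all entries in [0,1]. Then each view marginally follows a single-view SBM: for every symmetric zero-diagonal x1 : Fin n × Fin n → {0,1}, summing the two-view SBM joint likelihood over all symmetric zero-diagonal x2 : Fin n × Fin n → {0,1} gives ∑_{x2} L_{π,π',C,θ^{(1)},θ^{(2)}}(x1, x2) = L_{π,θ^{(1)}}(x1). -/

import Mathlib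

open Finset

/-- The constraint set `C_{π,π'}` of Gao et al. -/
def Cset {K K' : ℕ} (π : Fin K → ℝ) (π' : Fin K' → ℝ) :
    Set (Matrix (Fin K) (Fin K') ℝ) :=
  {C | (∀ k k', 0 ≤ C k k') ∧ (∀ k, ∑ k', C k k' * π' k' = 1) ∧
    (∀ k', ∑ k, π k * C k k' = 1)}

/-- The stochastic block model likelihood of an adjacency function
`x : Fin n → Fin n → Fin 2` (edge values in `{0,1}`). -/
def sbmL {n K : ℕ} (π : Fin K → ℝ) (θ : Matrix (Fin K) (Fin K) ℝ)
    (x : Fin n → Fin n → Fin 2) : ℝ :=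
  ∑ z : Fin n → Fin K, (∏ i, π (z i)) *
    ∏ i, ∏ j, if i < j then
      θ (z i) (z j) ^ (x i j : ℕ) * (1 - θ (z i) (z j)) ^ (1 - (x i j : ℕ)) else 1

/-- The two-view stochastic block model joint likelihood of a pair of adjacency functions. -/
def sbm2L {n K K' : ℕ} (π : Fin K → ℝ) (π' : Fin K' → ℝ)
    (C : Matrix (Fin K) (Fin K') ℝ)
    (θ1 : Matrix (Fin K) (Fin K) ℝ) (θ2 : Matrix (Fin K') (Fin K') ℝ)
    (x1 x2 : Fin n → Fin n → Fin 2) : ℝ :=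
  ∑ z1 : Fin n → Fin K, ∑ z2 : Fin n → Fin K',
    (∏ i, π (z1 i) * π' (z2 i) * C (z1 i) (z2 i)) *
    ((∏ i, ∏ j, if i < j then
        θ1 (z1 i) (z1 j) ^ (x1 i j : ℕ) * (1 - θ1 (z1 i) (z1 j)) ^ (1 - (x1 i j : ℕ)) else 1) *
      (∏ i, ∏ j, if i < j then
        θ2 (z2 i) (z2 j) ^ (x2 i j : ℕ) * (1 - θ2 (z2 i) (z2 j)) ^ (1 - (x2 i j : ℕ)) else 1))

/-! Summing out the second network first, every pair `i < j` of a symmetric zero-diagonal `x2`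
can be chosen independently, so the second-view edge factor sums to `∏ (θ + (1 - θ)) = 1`
whatever the labels `z2`. What remains is `∑ z2, ∏ i, π (z1 i) π' (z2 i) C (z1 i) (z2 i)`, which
factorises over the nodes and collapses to `∏ i, π (z1 i)` by the row constraint
`∑ k', C k k' π' k' = 1` of `C_{π,π'}`. -/

section UpperTriangular

variable {ι α R : Type*} [Fintype ι] [LinearOrder ι] [Fintype α] [CommSemiring R]

lemma prod_prod_ite_lt_eq_prod_subtype (f : ι → ι → R) :
    ∏ i, ∏ j, (if i < j then f i j else 1) = ∏ p : {p : ι × ι // p.1 < p.2}, f p.1.1 p.1.2 := by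
  rw [← prod_product' (f := fun i j => if i < j then f i j else 1), univ_product_univ,
    ← prod_filter]
  exact prod_subtype _ (fun p => by simp) (fun p : ι × ι => f p.1 p.2)

/-- A symmetric array with prescribed diagonal is freely determined by its entries above the
diagonal. -/
lemma sum_symm_constDiag_prod_ite_lt (d : α)
    [DecidablePred fun x : ι → ι → α => (∀ i j, x i j = x j i) ∧ ∀ i, x i i = d]
    (G : ι → ι → α → R) :
    ∑ x ∈ univ.filter (fun x : ι → ι → α => (∀ i j, x i j = x j i) ∧ ∀ i, x i i = d),
      ∏ i, ∏ j, (if i < j then G i j (x i j) else 1)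
    = ∏ i, ∏ j, if i < j then ∑ v, G i j v else 1 := by
  simp only [prod_prod_ite_lt_eq_prod_subtype]
  rw [Fintype.prod_sum]
  refine sum_nbij' (fun x p => x p.1.1 p.1.2)
    (fun f a b => if h : a < b then f ⟨(a, b), h⟩ else if h : b < a then f ⟨(b, a), h⟩ else d)
    (fun _ _ => mem_univ _) ?_ ?_ (fun f _ => funext fun p => dif_pos p.2) (fun _ _ => rfl)
  · intro f _
    simp only [mem_filter, mem_univ, true_and]
    refine ⟨fun i j => ?_, fun i => by simp⟩
    rcases lt_trichotomy i j with h | rfl | h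
    · rw [dif_pos h, dif_neg (not_lt.2 h.le), dif_pos h]
    · rfl
    · rw [dif_neg (not_lt.2 h.le), dif_pos h, dif_pos h]
  · intro x hx
    simp only [mem_filter, mem_univ, true_and] at hx
    funext a b
    rcases lt_trichotomy a b with h | rfl | h
    · exact dif_pos h
    · simp [hx.2 a]
    · rw [dif_neg (not_lt.2 h.le), dif_pos h, hx.1 a b]

end UpperTriangular

lemma sum_bernoulli_eq_one {R : Type*} [CommRing R] (t : R) :
    ∑ v : Fin 2, t ^ (v : ℕ) * (1 - t) ^ (1 - (v : ℕ)) = 1 := by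
  simp [Fin.sum_univ_two]

lemma sum_symm_zeroDiag_prod_bernoulli_eq_one {ι R : Type*} [Fintype ι] [LinearOrder ι]
    [CommRing R] [DecidablePred fun x : ι → ι → Fin 2 => (∀ i j, x i j = x j i) ∧ ∀ i, x i i = 0]
    (p : ι → ι → R) :
    ∑ x ∈ univ.filter (fun x : ι → ι → Fin 2 => (∀ i j, x i j = x j i) ∧ ∀ i, x i i = 0),
      ∏ i, ∏ j, (if i < j then p i j ^ (x i j : ℕ) * (1 - p i j) ^ (1 - (x i j : ℕ)) else 1)
    = 1 := by
  rw [sum_symm_constDiag_prod_ite_lt 0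
    fun i j (v : Fin 2) => p i j ^ (v : ℕ) * (1 - p i j) ^ (1 - (v : ℕ))]
  simp only [sum_bernoulli_eq_one, ite_self, prod_const_one]

lemma sum_prod_mul_coupling_eq_prod {ι κ κ' R : Type*} [Fintype ι] [DecidableEq ι] [Fintype κ']
    [CommSemiring R] (π : κ → R) (π' : κ' → R) (C : κ → κ' → R) (hrow : ∀ k, ∑ k', C k k' * π' k' = 1)
    (z : ι → κ) :
    ∑ z' : ι → κ', ∏ i, π (z i) * π' (z' i) * C (z i) (z' i) = ∏ i, π (z i) := by
  rw [← Fintype.prod_sum (fun i k' => π (z i) * π' k' * C (z i) k')]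
  refine prod_congr rfl fun i _ => ?_
  simp_rw [mul_assoc, ← mul_sum, mul_comm (π' _), hrow, mul_one]

theorem sbm2L_marginal_general {n K K' : ℕ}
    (π : Fin K → ℝ) (π' : Fin K' → ℝ)
    (C : Matrix (Fin K) (Fin K') ℝ) (hC : C ∈ Cset π π')
    (θ1 : Matrix (Fin K) (Fin K) ℝ) (θ2 : Matrix (Fin K') (Fin K') ℝ)
    (x1 : Fin n → Fin n → Fin 2) :
    ∑ x2 ∈ Finset.univ.filter
        (fun x2 : Fin n → Fin n → Fin 2 => (∀ i j, x2 i j = x2 j i) ∧ (∀ i, x2 i i = 0)),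
      sbm2L π π' C θ1 θ2 x1 x2 = sbmL π θ1 x1 := by
  unfold sbm2L sbmL
  rw [sum_comm]
  refine sum_congr rfl fun z1 _ => ?_
  rw [sum_comm]
  have hview2 (z2 : Fin n → Fin K') := sum_symm_zeroDiag_prod_bernoulli_eq_one
    fun i j => θ2 (z2 i) (z2 j)
  simp only [← mul_sum, hview2, mul_one]
  rw [← sum_mul, sum_prod_mul_coupling_eq_prod π π' C hC.2.1]

/-- Each view marginally follows a single-view SBM: summing the two-view joint likelihood
over all (symmetric, zero-diagonal) second networks gives the first-view SBM likelihood. -/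
theorem sbm2L_marginal {n K K' : ℕ} (hn : 1 ≤ n) (hK : 0 < K) (hK' : 0 < K')
    (π : Fin K → ℝ) (π' : Fin K' → ℝ)
    (hπpos : ∀ k, 0 < π k) (hπsum : ∑ k, π k = 1)
    (hπ'pos : ∀ k', 0 < π' k') (hπ'sum : ∑ k', π' k' = 1)
    (C : Matrix (Fin K) (Fin K') ℝ) (hC : C ∈ Cset π π')
    (θ1 : Matrix (Fin K) (Fin K) ℝ) (θ2 : Matrix (Fin K') (Fin K') ℝ)
    (hθ1symm : ∀ k k', θ1 k k' = θ1 k' k) (hθ1 : ∀ k k', 0 ≤ θ1 k k' ∧ θ1 k k' ≤ 1)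
    (hθ2symm : ∀ k k', θ2 k k' = θ2 k' k) (hθ2 : ∀ k k', 0 ≤ θ2 k k' ∧ θ2 k k' ≤ 1)
    (x1 : Fin n → Fin n → Fin 2)
    (hx1symm : ∀ i j, x1 i j = x1 j i) (hx1diag : ∀ i, x1 i i = 0) :
    ∑ x2 ∈ Finset.univ.filter
        (fun x2 : Fin n → Fin n → Fin 2 => (∀ i j, x2 i j = x2 j i) ∧ (∀ i, x2 i i = 0)),
      sbm2L π π' C θ1 θ2 x1 x2 = sbmL π θ1 x1 :=
  sbm2L_marginal_general π π' C hC θ1 θ2 x1
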